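/- arXiv:1105.1987 — 11 statements merged into one kernel-verified Lean document; each statement's English description precedes it below -/
import Mathlib

section
/- If Λ > 0, M > 0, and 9M²Λ < 1, then the function V(r) = 1 - 2M/r - Λr²/3 has exactly two positive roots r_b < r_c with V(r) > 0 for all r in (r_b, r_c). -/
/-!
Clearing the denominator, `V r = -(Λ r³ - 3r + 6M) / (3r)` for `r ≠ 0`. With `s = √Λ` the cubic is
`6M > 0` at `0`, `6M - 2/s < 0` at `1/s` (this is `3Ms < 1`, i.e. `9M²Λ < 1`) and `6M + 2/s > 0`
at `2/s`, so it has roots `0 < r_b < 1/s < r_c`. A cubic `a x³ + p x + q` without quadratic term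
that vanishes at `u ≠ v` equals `a (x - u)(x - v)(x + u + v)`; the third root is negative, which
gives both the sign of `V` between the roots and the absence of further positive roots.
-/

theorem depressed_cubic_eq_mul_of_roots {K : Type*} [Field K] {a p q u v : K} (huv : u ≠ v)
    (hu : a * u ^ 3 + p * u + q = 0) (hv : a * v ^ 3 + p * v + q = 0) (x : K) :
    a * x ^ 3 + p * x + q = a * ((x - u) * (x - v) * (x + u + v)) := by
  have hp : a * (u ^ 2 + u * v + v ^ 2) + p = 0 := by
    have hprod : (u - v) * (a * (u ^ 2 + u * v + v ^ 2) + p) = 0 := by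
      linear_combination hu - hv
    exact (mul_eq_zero.mp hprod).resolve_left (sub_ne_zero.mpr huv)
  linear_combination hu + (x - u) * hp

theorem one_sub_two_mul_div_sub_eq_neg_cubic_div {Λ M r : ℝ} (hr : r ≠ 0) :
    1 - 2 * M / r - Λ * r ^ 2 / 3 = -(Λ * r ^ 3 - 3 * r + 6 * M) / (3 * r) := by
  field_simp
  ring

theorem exists_two_pos_roots_cubic {Λ M : ℝ} (hΛ : 0 < Λ) (hM : 0 < M)
    (h9 : 9 * M ^ 2 * Λ < 1) :
    ∃ u v : ℝ, 0 < u ∧ u < v ∧ Λ * u ^ 3 - 3 * u + 6 * M = 0 ∧ Λ * v ^ 3 - 3 * v + 6 * M = 0 := by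
  set P : ℝ → ℝ := fun r => Λ * r ^ 3 - 3 * r + 6 * M with hP
  have hPc : Continuous P := by fun_prop
  set s := √Λ
  have hs : 0 < s := Real.sqrt_pos.mpr hΛ
  have hΛs : Λ = s ^ 2 := (Real.sq_sqrt hΛ.le).symm
  have h3Ms : 3 * M * s < 1 := by nlinarith [mul_pos hM hs]
  have hP0 : 0 < P 0 := by simp [hP, hM]
  have hP1 : P (1 / s) < 0 := by
    have hval : P (1 / s) = 6 * M - 2 / s := by
      simp only [hP, hΛs]; field_simp; ring
    rw [hval, sub_neg, lt_div_iff₀ hs]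
    linarith
  have hP2 : 0 < P (2 / s) := by
    have hval : P (2 / s) = 6 * M + 2 / s := by
      simp only [hP, hΛs]; field_simp; ring
    rw [hval]
    positivity
  obtain ⟨u, ⟨hu0, hu1⟩, hu⟩ :=
    intermediate_value_Ioo' (by positivity : (0 : ℝ) ≤ 1 / s) hPc.continuousOn
      ⟨hP1, hP0⟩
  obtain ⟨v, ⟨hv1, -⟩, hv⟩ :=
    intermediate_value_Ioo (by gcongr; norm_num : 1 / s ≤ 2 / s) hPc.continuousOn
      ⟨hP1, hP2⟩
  exact ⟨u, v, hu0, hu1.trans hv1, hu, hv⟩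

/-- For Λ > 0, M > 0, 9M²Λ < 1, the function V(r) = 1 - 2M/r - Λr²/3 has exactly
two positive roots r_b < r_c, with V > 0 on (r_b, r_c). -/
theorem stmt_0 (Λ M : ℝ) (hΛ : 0 < Λ) (hM : 0 < M) (h9 : 9 * M ^ 2 * Λ < 1)
    (V : ℝ → ℝ) (hV : ∀ r, V r = 1 - 2 * M / r - Λ * r ^ 2 / 3) :
    ∃ r_b r_c : ℝ, 0 < r_b ∧ r_b < r_c ∧ V r_b = 0 ∧ V r_c = 0 ∧
      (∀ r, r_b < r → r < r_c → 0 < V r) ∧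
      (∀ r, 0 < r → V r = 0 → r = r_b ∨ r = r_c) := by
  obtain ⟨u, v, hu0, huv, hu, hv⟩ := exists_two_pos_roots_cubic hΛ hM h9
  have hV_eq : ∀ r, 0 < r → V r = Λ * ((r - u) * (v - r) * (r + u + v)) / (3 * r) := by
    intro r hr
    rw [hV, one_sub_two_mul_div_sub_eq_neg_cubic_div hr.ne',
      sub_eq_add_neg (Λ * r ^ 3), ← neg_mul,
      depressed_cubic_eq_mul_of_roots huv.ne (by linear_combination hu) (by linear_combination hv)]
    ring
  refine ⟨u, v, hu0, huv, by simp [hV_eq u hu0], by simp [hV_eq v (hu0.trans huv)], ?_, ?_⟩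
  · intro r hur hrv
    rw [hV_eq r (hu0.trans hur)]
    have hfactors : 0 < (r - u) * (v - r) * (r + u + v) := by
      apply mul_pos (mul_pos (sub_pos.mpr hur) (sub_pos.mpr hrv))
      linarith
    exact div_pos (mul_pos hΛ hfactors) (by linarith)
  · intro r hr hVr
    rw [hV_eq r hr] at hVr
    have hsum : r + u + v ≠ 0 := by linarith
    simp only [div_eq_zero_iff, mul_eq_zero, sub_eq_zero, hΛ.ne', hsum, hr.ne',
      false_or, or_false, OfNat.ofNat_ne_zero] at hVr
    exact hVr.imp id Eq.symm
end

section
/- If Λ > 0, M > 0, 9M²Λ < 1, and r_b < r_c are the two positive roots of V(r) = 1 - 2M/r - Λr²/3, then 2M < r_b < 3M < 1/√Λ < r_c < √(3/Λ). -/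
/-! Clearing denominators, a positive root `r` of `V` is a root of the cubic `Λ r³ = 3 r - 6 M`.
Subtracting the cubic equations for `r_b ≠ r_c` and dividing by `r_c - r_b` gives
`Λ (r_b² + r_b r_c + r_c²) = 3`, hence `Λ r_b² < 1 < Λ r_c² < 3` since `0 < r_b < r_c`.
The bounds on `r_b` follow from `0 < Λ r_b³ = 3 r_b - 6 M < r_b`, those on `r_c` by taking square
roots, and `3 M √Λ < 1` is `9 M² Λ < 1`. -/

namespace DeSitterSchwarzschild

variable {Λ M b c : ℝ}

lemma mul_pow_three_eq_of_root (hb : b ≠ 0) (h : 1 - 2 * M / b - Λ * b ^ 2 / 3 = 0) :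
    Λ * b ^ 3 = 3 * b - 6 * M := by
  field_simp at h
  linarith

lemma mul_sum_sq_eq_three_of_ne (hbc : b ≠ c) (hb : Λ * b ^ 3 = 3 * b - 6 * M)
    (hc : Λ * c ^ 3 = 3 * c - 6 * M) : Λ * (b ^ 2 + b * c + c ^ 2) = 3 := by
  have h : (c - b) * (Λ * (b ^ 2 + b * c + c ^ 2) - 3) = 0 := by linear_combination hc - hb
  rcases mul_eq_zero.mp h with h | h
  · exact absurd (sub_eq_zero.mp h).symm hbc
  · linarith

section Roots

variable (hΛ : 0 < Λ) (hbc : b < c) (hsum : Λ * (b ^ 2 + b * c + c ^ 2) = 3)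
include hΛ hbc hsum

lemma mul_sq_lt_one_of_mul_sum_sq_eq_three (hb : 0 ≤ b) : Λ * b ^ 2 < 1 := by
  have : 3 * b ^ 2 < b ^ 2 + b * c + c ^ 2 := by nlinarith
  nlinarith

lemma one_lt_mul_sq_of_mul_sum_sq_eq_three (hb : 0 ≤ b) : 1 < Λ * c ^ 2 := by
  have : b ^ 2 + b * c + c ^ 2 < 3 * c ^ 2 := by nlinarith
  nlinarith

lemma mul_sq_lt_three_of_mul_sum_sq_eq_three (hb : 0 < b) : Λ * c ^ 2 < 3 := by
  have : 0 < Λ * (b ^ 2 + b * c) := by have := hb.trans hbc; positivity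
  linarith

end Roots

lemma two_mul_lt_of_mul_pow_three_eq (hΛ : 0 < Λ) (hb : 0 < b) (h : Λ * b ^ 3 = 3 * b - 6 * M) :
    2 * M < b := by
  have : 0 < Λ * b ^ 3 := by positivity
  linarith

lemma lt_three_mul_of_mul_pow_three_eq (hb : 0 < b) (h : Λ * b ^ 3 = 3 * b - 6 * M)
    (hb1 : Λ * b ^ 2 < 1) : b < 3 * M := by
  have : Λ * b ^ 3 < b := by nlinarith
  linarith

lemma lt_one_div_sqrt_of_sq_mul_lt_one {x : ℝ} (hΛ : 0 < Λ) (h : x ^ 2 * Λ < 1) :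
    x < 1 / √Λ := by
  rw [lt_div_iff₀ (Real.sqrt_pos.mpr hΛ)]
  calc x * √Λ ≤ |x| * √Λ := by gcongr; exact le_abs_self x
    _ = √(x ^ 2 * Λ) := by rw [Real.sqrt_mul' _ hΛ.le, Real.sqrt_sq_eq_abs]
    _ < 1 := by rwa [Real.sqrt_lt' one_pos, one_pow]

lemma one_div_sqrt_lt_of_one_lt_mul_sq (hΛ : 0 < Λ) (hc : 0 < c) (h : 1 < Λ * c ^ 2) :
    1 / √Λ < c := by
  rw [one_div, ← Real.sqrt_inv, Real.sqrt_lt' hc, inv_lt_iff_one_lt_mul₀ hΛ]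
  linarith

lemma lt_sqrt_div_of_mul_sq_lt {a : ℝ} (hΛ : 0 < Λ) (hc : 0 ≤ c) (h : Λ * c ^ 2 < a) :
    c < √(a / Λ) := by
  rw [Real.lt_sqrt hc, lt_div_iff₀ hΛ]
  linarith

end DeSitterSchwarzschild

open DeSitterSchwarzschild in
theorem stmt_1_general (Λ M : ℝ) (hΛ : 0 < Λ) (h9 : 9 * M ^ 2 * Λ < 1)
    (V : ℝ → ℝ) (hV : ∀ r, V r = 1 - 2 * M / r - Λ * r ^ 2 / 3)
    (r_b r_c : ℝ) (hb : 0 < r_b) (hbc : r_b < r_c)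
    (hVb : V r_b = 0) (hVc : V r_c = 0) :
    2 * M < r_b ∧ r_b < 3 * M ∧ 3 * M < 1 / Real.sqrt Λ ∧
      1 / Real.sqrt Λ < r_c ∧ r_c < Real.sqrt (3 / Λ) := by
  have hc : 0 < r_c := hb.trans hbc
  have cubic_b := mul_pow_three_eq_of_root hb.ne' (hV r_b ▸ hVb)
  have cubic_c := mul_pow_three_eq_of_root hc.ne' (hV r_c ▸ hVc)
  have hsum := mul_sum_sq_eq_three_of_ne hbc.ne cubic_b cubic_c
  have hb_sq := mul_sq_lt_one_of_mul_sum_sq_eq_three hΛ hbc hsum hb.le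
  have hc_sq := one_lt_mul_sq_of_mul_sum_sq_eq_three hΛ hbc hsum hb.le
  have hc_sq' := mul_sq_lt_three_of_mul_sum_sq_eq_three hΛ hbc hsum hb
  exact ⟨two_mul_lt_of_mul_pow_three_eq hΛ hb cubic_b,
    lt_three_mul_of_mul_pow_three_eq hb cubic_b hb_sq,
    lt_one_div_sqrt_of_sq_mul_lt_one hΛ (by linarith),
    one_div_sqrt_lt_of_one_lt_mul_sq hΛ hc hc_sq,
    lt_sqrt_div_of_mul_sq_lt hΛ hc.le hc_sq'⟩

/-- For Λ > 0, M > 0, 9M²Λ < 1, the two positive roots r_b < r_c of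
V(r) = 1 - 2M/r - Λr²/3 satisfy 2M < r_b < 3M < 1/√Λ < r_c < √(3/Λ). -/
theorem stmt_1 (Λ M : ℝ) (hΛ : 0 < Λ) (hM : 0 < M) (h9 : 9 * M ^ 2 * Λ < 1)
    (V : ℝ → ℝ) (hV : ∀ r, V r = 1 - 2 * M / r - Λ * r ^ 2 / 3)
    (r_b r_c : ℝ) (hb : 0 < r_b) (hbc : r_b < r_c)
    (hVb : V r_b = 0) (hVc : V r_c = 0) :
    2 * M < r_b ∧ r_b < 3 * M ∧ 3 * M < 1 / Real.sqrt Λ ∧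
      1 / Real.sqrt Λ < r_c ∧ r_c < Real.sqrt (3 / Λ) :=
  stmt_1_general Λ M hΛ h9 V hV r_b r_c hb hbc hVb hVc
end

section
/- If Λ > 0, M > 0, and 9M²Λ > 1, then V(r) = 1 - 2M/r - Λr²/3 is strictly negative for all r > 0 (there are no horizons). -/
/-!
Multiplying by `3r > 0`, the claim is `3r < Λ r³ + 6M`. With `s = √Λ`, the identity
`x³ - 3x + 2 = (x - 1)²(x + 2)` at `x = s r` gives `3r ≤ Λ r³ + 2/s` (the cubic is minimal at
`r = 1/s`), and `9M²Λ > 1` says exactly that `2/s < 6M`.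
-/

open Real

lemma cube_sub_three_mul_add_two_nonneg {x : ℝ} (hx : 0 ≤ x) : 0 ≤ x ^ 3 - 3 * x + 2 := by
  have h : x ^ 3 - 3 * x + 2 = (x - 1) ^ 2 * (x + 2) := by ring
  rw [h]
  positivity

lemma three_mul_le_sq_mul_cube_add_two_div {s r : ℝ} (hs : 0 < s) (hr : 0 ≤ r) :
    3 * r ≤ s ^ 2 * r ^ 3 + 2 / s := by
  have hcube := cube_sub_three_mul_add_two_nonneg (mul_nonneg hs.le hr)
  have h : s ^ 2 * r ^ 3 + 2 / s - 3 * r = ((s * r) ^ 3 - 3 * (s * r) + 2) / s := by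
    field_simp
    ring
  have : 0 ≤ s ^ 2 * r ^ 3 + 2 / s - 3 * r := h ▸ div_nonneg hcube hs.le
  linarith

lemma two_div_sqrt_lt {Λ M : ℝ} (hΛ : 0 < Λ) (hM : 0 < M) (h9 : 1 < 9 * M ^ 2 * Λ) :
    2 / √Λ < 6 * M := by
  have hs : 0 < √Λ := sqrt_pos.mpr hΛ
  have hsq : (3 * M * √Λ) ^ 2 = 9 * M ^ 2 * Λ := by
    rw [mul_pow, sq_sqrt hΛ.le]
    ring
  have h1 : 1 < 3 * M * √Λ := (one_lt_sq_iff₀ (by positivity)).mp (hsq ▸ h9)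
  rw [div_lt_iff₀ hs]
  linarith

/-- For Λ > 0, M > 0, 9M²Λ > 1, the function V(r) = 1 - 2M/r - Λr²/3 is
strictly negative for all r > 0 (no horizons). -/
theorem stmt_2 (Λ M : ℝ) (hΛ : 0 < Λ) (hM : 0 < M) (h9 : 1 < 9 * M ^ 2 * Λ)
    (V : ℝ → ℝ) (hV : ∀ r, V r = 1 - 2 * M / r - Λ * r ^ 2 / 3) :
    ∀ r, 0 < r → V r < 0 := by
  intro r hr
  have hcubic : 3 * r < Λ * r ^ 3 + 6 * M := by
    have h := three_mul_le_sq_mul_cube_add_two_div (sqrt_pos.mpr hΛ) hr.le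
    rw [sq_sqrt hΛ.le] at h
    linarith [two_div_sqrt_lt hΛ hM h9]
  have hVr : V r = (3 * r - (Λ * r ^ 3 + 6 * M)) / (3 * r) := by
    rw [hV]
    field_simp
    ring
  rw [hVr]
  exact div_neg_of_neg_of_pos (by linarith) (by positivity)
end

section
/- The polynomial function f(r) = r²·V(r) + (3M - r)², where V(r) = 1 - 2M/r - Λr²/3, has exactly one root r_k in the interval (r_c, ∞), where r_c is the larger positive root of V. -/
/-!
The derivative of `f = r²V + (3M - r)²` is `4 r V(r)`, which is negative beyond `r_c`, so `f` is
strictly decreasing on `[r_c, ∞)`. At `r_c` we have `f r_c = (3M - r_c)² > 0`, because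
`V(3M) = 1/3 - 3ΛM² > 0` forces `r_c ≠ 3M`; and `f` is a quartic with leading coefficient `-Λ/3`,
so it tends to `-∞`. The intermediate value theorem gives the root, monotonicity its uniqueness.
-/

open Set Filter

section

variable {Λ M : ℝ} {V f : ℝ → ℝ}

lemma sq_mul_add_sq_eq_quartic (hV : ∀ r, V r = 1 - 2 * M / r - Λ * r ^ 2 / 3)
    (hf : ∀ r, f r = r ^ 2 * V r + (3 * M - r) ^ 2) :
    f = fun r => 2 * r ^ 2 - 8 * M * r + 9 * M ^ 2 - Λ * r ^ 4 / 3 := by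
  funext r
  rw [hf, hV]
  rcases eq_or_ne r 0 with rfl | hr
  · simp only [ne_eq, OfNat.ofNat_ne_zero, not_false_eq_true, zero_pow, div_zero]
    ring
  · field_simp
    ring

lemma continuous_sq_mul_add_sq (hV : ∀ r, V r = 1 - 2 * M / r - Λ * r ^ 2 / 3)
    (hf : ∀ r, f r = r ^ 2 * V r + (3 * M - r) ^ 2) : Continuous f := by
  rw [sq_mul_add_sq_eq_quartic hV hf]
  fun_prop

lemma hasDerivAt_sq_mul_add_sq (hV : ∀ r, V r = 1 - 2 * M / r - Λ * r ^ 2 / 3)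
    (hf : ∀ r, f r = r ^ 2 * V r + (3 * M - r) ^ 2) {r : ℝ} (hr : r ≠ 0) :
    HasDerivAt f (4 * r * V r) r := by
  rw [sq_mul_add_sq_eq_quartic hV hf, hV]
  refine (((((hasDerivAt_pow 2 r).const_mul 2).sub ((hasDerivAt_id' r).const_mul (8 * M))).add_const
    (9 * M ^ 2)).sub (((hasDerivAt_pow 4 r).const_mul Λ).div_const 3)).congr_deriv ?_
  field_simp
  ring

lemma tendsto_quartic_atBot (hΛ : 0 < Λ) (hM : 0 ≤ M) :
    Tendsto (fun r => 2 * r ^ 2 - 8 * M * r + 9 * M ^ 2 - Λ * r ^ 4 / 3) atTop atBot := by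
  have hsq : Tendsto (fun r : ℝ => r ^ 2) atTop atTop := tendsto_pow_atTop two_ne_zero
  have hbracket : Tendsto (fun r : ℝ => 2 - Λ / 3 * r ^ 2) atTop atBot :=
    tendsto_atBot_add_const_left _ _
      (tendsto_neg_atTop_atBot.comp (hsq.const_mul_atTop (by positivity)))
  refine tendsto_atBot_mono' _ ?_
    (tendsto_atBot_add_const_right _ (9 * M ^ 2) (hsq.atTop_mul_atBot₀ hbracket))
  filter_upwards [eventually_ge_atTop 0] with r hr
  nlinarith [mul_nonneg hM hr]

lemma strictAntiOn_Ici_sq_mul_add_sq (hV : ∀ r, V r = 1 - 2 * M / r - Λ * r ^ 2 / 3)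
    (hf : ∀ r, f r = r ^ 2 * V r + (3 * M - r) ^ 2) {r_c : ℝ} (hc : 0 ≤ r_c)
    (hneg : ∀ r, r_c < r → V r < 0) : StrictAntiOn f (Ici r_c) := by
  refine strictAntiOn_of_deriv_neg (convex_Ici r_c) (continuous_sq_mul_add_sq hV hf).continuousOn
    fun r hr => ?_
  rw [interior_Ici] at hr
  have hr0 : 0 < r := hc.trans_lt hr
  rw [(hasDerivAt_sq_mul_add_sq hV hf hr0.ne').deriv]
  nlinarith [hneg r hr]

lemma apply_three_mul_pos (hV : ∀ r, V r = 1 - 2 * M / r - Λ * r ^ 2 / 3) (hM : 0 < M)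
    (h9 : 9 * M ^ 2 * Λ < 1) : 0 < V (3 * M) := by
  rw [hV, show 2 * M / (3 * M) = 2 / 3 by field_simp]
  linarith

end

/-- For Λ > 0, M > 0, 9M²Λ < 1, the function f(r) = r²V(r) + (3M - r)² has
exactly one root r_k in (r_c, ∞), r_c being the larger positive root of V. -/
theorem stmt_4 (Λ M : ℝ) (hΛ : 0 < Λ) (hM : 0 < M) (h9 : 9 * M ^ 2 * Λ < 1)
    (V : ℝ → ℝ) (hV : ∀ r, V r = 1 - 2 * M / r - Λ * r ^ 2 / 3)
    (r_c : ℝ) (hc : 0 < r_c) (hVc : V r_c = 0)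
    (hlarger : ∀ r, r_c < r → V r < 0)
    (f : ℝ → ℝ) (hf : ∀ r, f r = r ^ 2 * V r + (3 * M - r) ^ 2) :
    ∃! r_k : ℝ, r_c < r_k ∧ f r_k = 0 := by
  have hanti := strictAntiOn_Ici_sq_mul_add_sq hV hf hc.le hlarger
  have hne : 3 * M - r_c ≠ 0 :=
    sub_ne_zero.mpr fun h => (apply_three_mul_pos hV hM h9).ne' (h ▸ hVc)
  have hfc : 0 < f r_c := by
    rw [hf, hVc, mul_zero, zero_add]
    positivity
  have hlim : Tendsto f atTop atBot := by
    rw [sq_mul_add_sq_eq_quartic hV hf]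
    exact tendsto_quartic_atBot hΛ hM.le
  obtain ⟨r_k, hk, hfk⟩ :=
    intermediate_value_Ioi' (continuous_sq_mul_add_sq hV hf).continuousOn hlim hfc
  refine ⟨r_k, ⟨hk, hfk⟩, fun r ⟨hr, hfr⟩ => ?_⟩
  exact hanti.injOn (mem_Ici_of_Ioi hr) (mem_Ici_of_Ioi hk) (hfr.trans hfk.symm)
end

section
/- For Λ > 0, M > 0, 9M²Λ < 1, the mean curvature K_k = K_m(r_k) of the constant-radius CMC hypersurface at the cusp radius r_k satisfies √Λ < K_k < √(3Λ), where K_m(r) = -(1/r²)·(3M - r)/√(-V(r)) + (3/r)·√(-V(r)) evaluated at r = r_k, and r_k > r_c is determined by r_k²·V(r_k) + (3M - r_k)² = 0. -/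
/-!
At the cusp radius the defining equation says exactly that `-V(r_k) = ((r_k - 3M)/r_k)²`, and
`r_k > 3M` because `V(3M) = 1/3 - 3ΛM² > 0` forces `3M ≤ r_c`. Hence `√(-V(r_k))` is rational in
`r_k`, the curvature collapses to `K_k = (4r_k - 9M)/r_k²`, and the same equation expresses `Λ`
as `Λ r_k⁴ = 6r_k² - 24Mr_k + 27M²`. Both bounds are then polynomial inequalities:
`K_k²r_k⁴ - Λr_k⁴ = 2(5r_k - 9M)(r_k - 3M) > 0` and `3Λr_k⁴ - K_k²r_k⁴ = 2r_k² > 0`.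
-/

namespace CuspRadius

variable {M Λ r : ℝ}

lemma potential_three_mul_pos (hM : 0 < M) (h9 : 9 * M ^ 2 * Λ < 1) :
    0 < 1 - 2 * M / (3 * M) - Λ * (3 * M) ^ 2 / 3 := by
  have : 2 * M / (3 * M) = 2 / 3 := by field_simp
  rw [this]
  nlinarith

lemma sqrt_neg_eq {v : ℝ} (hr : 0 < r) (h3M : 3 * M ≤ r)
    (h : r ^ 2 * v + (3 * M - r) ^ 2 = 0) :
    √(-v) = (r - 3 * M) / r := by
  have hv : -v = ((r - 3 * M) / r) ^ 2 := by
    field_simp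
    linarith
  rw [hv, Real.sqrt_sq (div_nonneg (by linarith) hr.le)]

lemma meanCurvature_eq (hr : 0 < r) (h3M : 3 * M < r) :
    -(1 / r ^ 2) * (3 * M - r) / ((r - 3 * M) / r) + (3 / r) * ((r - 3 * M) / r) =
      (4 * r - 9 * M) / r ^ 2 := by
  have : r - 3 * M ≠ 0 := by linarith
  field_simp
  ring

lemma mul_pow_four_eq (hr : r ≠ 0)
    (h : r ^ 2 * (1 - 2 * M / r - Λ * r ^ 2 / 3) + (3 * M - r) ^ 2 = 0) :
    Λ * r ^ 4 = 6 * r ^ 2 - 24 * M * r + 27 * M ^ 2 := by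
  field_simp at h
  linarith

lemma sqrt_lt_and_lt_sqrt (hr : 0 < r) (h3M : 3 * M < r)
    (hΛ : Λ * r ^ 4 = 6 * r ^ 2 - 24 * M * r + 27 * M ^ 2) :
    √Λ < (4 * r - 9 * M) / r ^ 2 ∧ (4 * r - 9 * M) / r ^ 2 < √(3 * Λ) := by
  have hK : 0 < (4 * r - 9 * M) / r ^ 2 := div_pos (by linarith) (by positivity)
  have hK2 : ((4 * r - 9 * M) / r ^ 2) ^ 2 = (4 * r - 9 * M) ^ 2 / r ^ 4 := by ring
  have hr4 : 0 < r ^ 4 := by positivity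
  refine ⟨(Real.sqrt_lt' hK).mpr ?_, (Real.lt_sqrt hK.le).mpr ?_⟩
  · rw [hK2, lt_div_iff₀ hr4, hΛ]
    nlinarith [mul_pos (show 0 < 5 * r - 9 * M by linarith) (show 0 < r - 3 * M by linarith)]
  · rw [hK2, div_lt_iff₀ hr4, mul_assoc, hΛ]
    nlinarith [pow_pos hr 2]

end CuspRadius

open CuspRadius

theorem stmt_5_general (Λ M : ℝ) (hM : 0 < M) (h9 : 9 * M ^ 2 * Λ < 1)
    (V : ℝ → ℝ) (hV : ∀ r, V r = 1 - 2 * M / r - Λ * r ^ 2 / 3)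
    (r_c : ℝ) (hc : 0 < r_c)
    (hlarger : ∀ r, r_c < r → V r < 0)
    (r_k : ℝ) (hk : r_c < r_k)
    (hrk : r_k ^ 2 * V r_k + (3 * M - r_k) ^ 2 = 0)
    (K_k : ℝ)
    (hKk : K_k = -(1 / r_k ^ 2) * (3 * M - r_k) / Real.sqrt (-V r_k) +
      (3 / r_k) * Real.sqrt (-V r_k)) :
    Real.sqrt Λ < K_k ∧ K_k < Real.sqrt (3 * Λ) := by
  have hr : 0 < r_k := hc.trans hk
  have h3M : 3 * M < r_k := by
    refine lt_of_le_of_lt (not_lt.mp fun h => ?_) hk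
    have hneg := hlarger _ h
    rw [hV] at hneg
    linarith [potential_three_mul_pos hM h9]
  rw [hKk, sqrt_neg_eq hr h3M.le hrk, meanCurvature_eq hr h3M]
  rw [hV] at hrk
  exact sqrt_lt_and_lt_sqrt hr h3M (mul_pow_four_eq hr.ne' hrk)

/-- For Λ > 0, M > 0, 9M²Λ < 1, the mean curvature K_k = K_m(r_k) at the cusp
radius r_k satisfies √Λ < K_k < √(3Λ). -/
theorem stmt_5 (Λ M : ℝ) (hΛ : 0 < Λ) (hM : 0 < M) (h9 : 9 * M ^ 2 * Λ < 1)
    (V : ℝ → ℝ) (hV : ∀ r, V r = 1 - 2 * M / r - Λ * r ^ 2 / 3)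
    (r_c : ℝ) (hc : 0 < r_c) (hVc : V r_c = 0)
    (hlarger : ∀ r, r_c < r → V r < 0)
    (r_k : ℝ) (hk : r_c < r_k)
    (hrk : r_k ^ 2 * V r_k + (3 * M - r_k) ^ 2 = 0)
    (K_k : ℝ)
    (hKk : K_k = -(1 / r_k ^ 2) * (3 * M - r_k) / Real.sqrt (-V r_k) +
      (3 / r_k) * Real.sqrt (-V r_k)) :
    Real.sqrt Λ < K_k ∧ K_k < Real.sqrt (3 * Λ) :=
  stmt_5_general Λ M hM h9 V hV r_c hc hlarger r_k hk hrk K_k hKk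
end

section
/- For r_m > r_c (so that V(r_m) < 0), the pair (K, C) = (K_m(r_m), C_m(r_m)) with K_m(r_m) = (1/r_m²)·(3M - r_m)/√(-V(r_m)) - (3/r_m)·√(-V(r_m)) and C_m(r_m) = (r_m/3)·(3M - r_m)/√(-V(r_m)) satisfies D(r_m) = 0 and D'(r_m) = 0, where D(r) = 1 - 2M/r - Λr²/3 + (Kr/3 - C/r²)². -/
/-!
Write `s = √(-V(r_m))`. The constants `K_m`, `C_m` are chosen so that the profile
`f(r) = K r / 3 - C / r²` takes the value `-s` at `r_m`; then `D(r_m) = V(r_m) + s² = 0`.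
Moreover `f'(r_m) = (3M - r_m) / (r_m² s) - s / r_m`, so `2 f f' = -V'` at `r_m`
and `D'(r_m) = V'(r_m) + 2 f(r_m) f'(r_m) = 0`.
-/

noncomputable section

/-- The Schwarzschild–de Sitter potential `V`. -/
def sdsPotential (M Λ r : ℝ) : ℝ := 1 - 2 * M / r - Λ * r ^ 2 / 3

def profile (K C r : ℝ) : ℝ := K * r / 3 - C / r ^ 2

theorem hasDerivAt_sdsPotential (M Λ : ℝ) {r : ℝ} (hr : r ≠ 0) :
    HasDerivAt (sdsPotential M Λ) (2 * M / r ^ 2 - 2 * Λ * r / 3) r := by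
  have hinv : HasDerivAt (fun r : ℝ => 2 * M / r) (2 * M * -(r ^ 2)⁻¹) r := by
    simpa only [div_eq_mul_inv] using (hasDerivAt_inv hr).const_mul (2 * M)
  have hsq : HasDerivAt (fun r : ℝ => Λ * r ^ 2 / 3) (Λ * (2 * r) / 3) r := by
    simpa using ((hasDerivAt_pow 2 r).const_mul Λ).div_const 3
  refine (((hasDerivAt_const r (1 : ℝ)).sub hinv).sub hsq).congr_deriv ?_
  field_simp
  ring

theorem hasDerivAt_profile (K C : ℝ) {r : ℝ} (hr : r ≠ 0) :
    HasDerivAt (profile K C) (K / 3 + 2 * C / r ^ 3) r := by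
  have hlin : HasDerivAt (fun r : ℝ => K * r / 3) (K / 3) r := by
    simpa using ((hasDerivAt_id r).const_mul K).div_const 3
  have hinv : HasDerivAt (fun r : ℝ => C / r ^ 2) (C * (-(2 * r) / (r ^ 2) ^ 2)) r := by
    simpa [div_eq_mul_inv] using
      ((hasDerivAt_pow 2 r).inv (pow_ne_zero 2 hr)).const_mul C
  refine (hlin.sub hinv).congr_deriv ?_
  field_simp
  ring

section Tuning

variable (M : ℝ) {r s : ℝ}

/-- `K_m(r)` with `√(-V(r))` replaced by a free parameter `s`. -/
def tunedK (r s : ℝ) : ℝ := (1 / r ^ 2) * (3 * M - r) / s - (3 / r) * s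

/-- `C_m(r)` with `√(-V(r))` replaced by a free parameter `s`. -/
def tunedC (r s : ℝ) : ℝ := (r / 3) * (3 * M - r) / s

theorem profile_tuned (hr : r ≠ 0) (hs : s ≠ 0) :
    profile (tunedK M r s) (tunedC M r s) r = -s := by
  unfold profile tunedK tunedC
  field_simp
  ring

theorem profile_slope_tuned (hr : r ≠ 0) (hs : s ≠ 0) :
    tunedK M r s / 3 + 2 * tunedC M r s / r ^ 3 = (3 * M - r) / (r ^ 2 * s) - s / r := by
  unfold tunedK tunedC
  field_simp
  ring

theorem deriv_sdsPotential_add_profile_sq_tuned (Λ : ℝ) (hr : r ≠ 0) (hs : s ≠ 0)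
    (hsV : s ^ 2 = -sdsPotential M Λ r) :
    deriv (sdsPotential M Λ + profile (tunedK M r s) (tunedC M r s) ^ 2) r = 0 := by
  have hD := (hasDerivAt_sdsPotential M Λ hr).add
    ((hasDerivAt_profile (tunedK M r s) (tunedC M r s) hr).pow 2)
  rw [hD.deriv, profile_tuned M hr hs, profile_slope_tuned M hr hs]
  simp only [Nat.cast_ofNat, Nat.add_one_sub_one, pow_one]
  unfold sdsPotential at hsV
  field_simp at hsV ⊢
  linear_combination 2 * hsV

end Tuning

end

theorem stmt_6_general (Λ M : ℝ)
    (V : ℝ → ℝ) (hV : ∀ r, V r = 1 - 2 * M / r - Λ * r ^ 2 / 3)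
    (r_c : ℝ) (hc : 0 < r_c)
    (hlarger : ∀ r, r_c < r → V r < 0)
    (r_m : ℝ) (hm : r_c < r_m)
    (K C : ℝ)
    (hK : K = (1 / r_m ^ 2) * (3 * M - r_m) / Real.sqrt (-V r_m) -
      (3 / r_m) * Real.sqrt (-V r_m))
    (hC : C = (r_m / 3) * (3 * M - r_m) / Real.sqrt (-V r_m))
    (D : ℝ → ℝ) (hD : ∀ r, D r = V r + (K * r / 3 - C / r ^ 2) ^ 2) :
    D r_m = 0 ∧ deriv D r_m = 0 := by
  have hVdef : V = sdsPotential M Λ := funext hV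
  have hr : r_m ≠ 0 := (hc.trans hm).ne'
  have hVneg : V r_m < 0 := hlarger r_m hm
  set s := Real.sqrt (-V r_m)
  have hs : s ≠ 0 := (Real.sqrt_pos.mpr (neg_pos.mpr hVneg)).ne'
  have hsV : s ^ 2 = -V r_m := Real.sq_sqrt (neg_pos.mpr hVneg).le
  have hDdef : D = sdsPotential M Λ + profile (tunedK M r_m s) (tunedC M r_m s) ^ 2 := by
    funext x
    rw [hD, hK, hC, hVdef]
    rfl
  subst hVdef
  refine ⟨?_, ?_⟩
  · rw [hDdef]
    simp only [Pi.add_apply, Pi.pow_apply, profile_tuned M hr hs, neg_sq, hsV, add_neg_cancel]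
  · rw [hDdef]
    exact deriv_sdsPotential_add_profile_sq_tuned M Λ hr hs hsV

/-- For r_m > r_c (so V(r_m) < 0), the pair (K, C) = (K_m(r_m), C_m(r_m))
makes D(r) = V(r) + (Kr/3 - C/r²)² satisfy D(r_m) = 0 and D'(r_m) = 0. -/
theorem stmt_6 (Λ M : ℝ) (hΛ : 0 < Λ) (hM : 0 < M) (h9 : 9 * M ^ 2 * Λ < 1)
    (V : ℝ → ℝ) (hV : ∀ r, V r = 1 - 2 * M / r - Λ * r ^ 2 / 3)
    (r_c : ℝ) (hc : 0 < r_c) (hVc : V r_c = 0)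
    (hlarger : ∀ r, r_c < r → V r < 0)
    (r_m : ℝ) (hm : r_c < r_m)
    (K C : ℝ)
    (hK : K = (1 / r_m ^ 2) * (3 * M - r_m) / Real.sqrt (-V r_m) -
      (3 / r_m) * Real.sqrt (-V r_m))
    (hC : C = (r_m / 3) * (3 * M - r_m) / Real.sqrt (-V r_m))
    (D : ℝ → ℝ) (hD : ∀ r, D r = V r + (K * r / 3 - C / r ^ 2) ^ 2) :
    D r_m = 0 ∧ deriv D r_m = 0 :=
  stmt_6_general Λ M V hV r_c hc hlarger r_m hm K C hK hC D hD
end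

section
/- The derivatives of the curve r_m ↦ (K_m(r_m), C_m(r_m)) of constant-radius CMC data satisfy dC_m/dr_m = (r_m³/3)·(dK_m/dr_m) for all r_m > r_c. -/
/-!
With `s = √(-V)`, the data are related by `C_m = (r³/3)·K_m + r²·s`, and the potential
`V = 1 - 2M/r - Λr²/3` makes `(r²·s)' = -r²·K_m` wherever `V < 0`. Differentiating the
relation, the terms `r²·K_m` and `(r²·s)'` cancel, leaving `C_m' = (r³/3)·K_m'`.
-/

section CMCData

variable {Λ M : ℝ} {V Km Cm : ℝ → ℝ}

lemma Cm_eq_cube_mul_Km_add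
    (hKm : ∀ r, Km r = (3 * M - r) / (r ^ 2 * Real.sqrt (-V r)) - (3 / r) * Real.sqrt (-V r))
    (hCm : ∀ r, Cm r = (r / 3) * (3 * M - r) / Real.sqrt (-V r)) (x : ℝ) :
    Cm x = x ^ 3 / 3 * Km x + x ^ 2 * Real.sqrt (-V x) := by
  rw [hCm, hKm]
  rcases eq_or_ne x 0 with rfl | hx
  · simp
  rcases eq_or_ne (Real.sqrt (-V x)) 0 with hs | hs
  · simp [hs]
  field_simp
  ring

variable (hV : ∀ r, V r = 1 - 2 * M / r - Λ * r ^ 2 / 3)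
include hV

lemma hasDerivAt_neg_potential {r : ℝ} (hr : r ≠ 0) :
    HasDerivAt (fun x => -V x) (2 * Λ * r / 3 - 2 * M / r ^ 2) r := by
  have hW : (fun x => -V x) = fun x => -1 + 2 * M * x⁻¹ + Λ * x ^ 2 / 3 := by
    funext x; rw [hV]; ring
  rw [hW]
  refine ((((hasDerivAt_inv hr).const_mul (2 * M)).const_add (-1)).add
      (((hasDerivAt_pow 2 r).const_mul Λ).div_const 3)).congr_deriv ?_
  push_cast
  ring

lemma hasDerivAt_sqrt_neg_potential {r : ℝ} (hr : r ≠ 0) (hVr : V r < 0) :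
    HasDerivAt (fun x => Real.sqrt (-V x))
      ((2 * Λ * r / 3 - 2 * M / r ^ 2) / (2 * Real.sqrt (-V r))) r :=
  (hasDerivAt_neg_potential hV hr).sqrt (neg_ne_zero.2 hVr.ne)

lemma differentiableAt_Km
    (hKm : ∀ r, Km r = (3 * M - r) / (r ^ 2 * Real.sqrt (-V r)) - (3 / r) * Real.sqrt (-V r))
    {r : ℝ} (hr : r ≠ 0) (hVr : V r < 0) : DifferentiableAt ℝ Km r := by
  have hs := (hasDerivAt_sqrt_neg_potential hV hr hVr).differentiableAt
  have hs0 : Real.sqrt (-V r) ≠ 0 := (Real.sqrt_pos.2 (neg_pos.2 hVr)).ne'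
  rw [show Km = _ from funext hKm]
  fun_prop (disch := positivity)

lemma hasDerivAt_sq_mul_sqrt_neg_potential
    (hKm : ∀ r, Km r = (3 * M - r) / (r ^ 2 * Real.sqrt (-V r)) - (3 / r) * Real.sqrt (-V r))
    {r : ℝ} (hr : r ≠ 0) (hVr : V r < 0) :
    HasDerivAt (fun x => x ^ 2 * Real.sqrt (-V x)) (-(r ^ 2 * Km r)) r := by
  refine ((hasDerivAt_pow 2 r).mul (hasDerivAt_sqrt_neg_potential hV hr hVr)).congr_deriv ?_
  have hs0 : 0 < Real.sqrt (-V r) := Real.sqrt_pos.2 (neg_pos.2 hVr)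
  have hrs2 : r * Real.sqrt (-V r) ^ 2 = 2 * M - r + Λ * r ^ 3 / 3 := by
    rw [Real.sq_sqrt (neg_pos.2 hVr).le, hV]
    field_simp
    ring
  rw [hKm]
  field_simp
  linear_combination (-3) * hrs2

end CMCData

theorem stmt_7_general (Λ M : ℝ)
    (V : ℝ → ℝ) (hV : ∀ r, V r = 1 - 2 * M / r - Λ * r ^ 2 / 3)
    (r_c : ℝ) (hc : 0 < r_c)
    (hlarger : ∀ r, r_c < r → V r < 0)
    (Km Cm : ℝ → ℝ)
    (hKm : ∀ r, Km r = (3 * M - r) / (r ^ 2 * Real.sqrt (-V r)) -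
      (3 / r) * Real.sqrt (-V r))
    (hCm : ∀ r, Cm r = (r / 3) * (3 * M - r) / Real.sqrt (-V r)) :
    ∀ r_m, r_c < r_m → deriv Cm r_m = (r_m ^ 3 / 3) * deriv Km r_m := by
  intro r hr
  have hr0 : r ≠ 0 := (hc.trans hr).ne'
  have hVr := hlarger r hr
  have hC : HasDerivAt Cm (r ^ 2 * Km r + r ^ 3 / 3 * deriv Km r - r ^ 2 * Km r) r := by
    rw [show Cm = _ from funext (Cm_eq_cube_mul_Km_add hKm hCm)]
    refine (((hasDerivAt_pow 3 r).div_const 3).mul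
      (differentiableAt_Km hV hKm hr0 hVr).hasDerivAt).add
      (hasDerivAt_sq_mul_sqrt_neg_potential hV hKm hr0 hVr) |>.congr_deriv ?_
    push_cast
    ring
  rw [hC.deriv]
  ring

/-- The curve r_m ↦ (K_m(r_m), C_m(r_m)) of constant-radius CMC data satisfies
dC_m/dr_m = (r_m³/3)·dK_m/dr_m for all r_m > r_c. -/
theorem stmt_7 (Λ M : ℝ) (hΛ : 0 < Λ) (hM : 0 < M) (h9 : 9 * M ^ 2 * Λ < 1)
    (V : ℝ → ℝ) (hV : ∀ r, V r = 1 - 2 * M / r - Λ * r ^ 2 / 3)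
    (r_c : ℝ) (hc : 0 < r_c) (hVc : V r_c = 0)
    (hlarger : ∀ r, r_c < r → V r < 0)
    (Km Cm : ℝ → ℝ)
    (hKm : ∀ r, Km r = (3 * M - r) / (r ^ 2 * Real.sqrt (-V r)) -
      (3 / r) * Real.sqrt (-V r))
    (hCm : ∀ r, Cm r = (r / 3) * (3 * M - r) / Real.sqrt (-V r)) :
    ∀ r_m, r_c < r_m → deriv Cm r_m = (r_m ^ 3 / 3) * deriv Km r_m :=
  stmt_7_general Λ M V hV r_c hc hlarger Km Cm hKm hCm
end

section
/- At the cusp value (K, C) = (K_m(r_k), C_m(r_k)), the function D(r) = V(r) + (Kr/3 - C/r²)² has a zero of order three at r = r_k: D(r_k) = D'(r_k) = D''(r_k) = 0. -/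
/-!
Since `9M²Λ < 1`, the lapse is positive at the photon sphere `r = 3M`, so `3M ≤ r_c < r_k`. The
cusp condition then reads `V(r_k) = -((r_k - 3M)/r_k)²`, which gives `√(-V r_k) = (r_k - 3M)/r_k`,
`K = (9M - 4r_k)/r_k²`, `C = -r_k²/3` and `Λ = 3(2r_k² - 8Mr_k + 9M²)/r_k⁴`. With these values `M`
cancels and `D(r) = -(r - r_k)³ (2r³ + 6r_k r² + 3r_k² r + r_k³) / (9 r_k² r⁴)` near `r_k`.
-/

open Filter Topology

theorem triple_zero_of_eventuallyEq_sub_pow_three_mul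
    {𝕜 : Type*} [NontriviallyNormedField 𝕜] {f g : 𝕜 → 𝕜} {a : 𝕜}
    (hfg : f =ᶠ[𝓝 a] fun x => (x - a) ^ 3 * g x) (hg : ContDiffAt 𝕜 2 g a) :
    f a = 0 ∧ deriv f a = 0 ∧ deriv (deriv f) a = 0 := by
  have hg' : ∀ᶠ x in 𝓝 a, DifferentiableAt 𝕜 g x :=
    (hg.eventually (by simp)).mono fun x hx => hx.differentiableAt (by simp)
  have hdg : DifferentiableAt 𝕜 (deriv g) a :=
    (hg.derivWithin (m := 1) (by norm_num)).differentiableAt (by simp)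
  have hderiv : deriv f =ᶠ[𝓝 a] fun x => (x - a) ^ 2 * (3 * g x + (x - a) * deriv g x) := by
    filter_upwards [hfg.eventuallyEq_nhds, hg'] with x hfx hgx
    have : HasDerivAt (fun x => (x - a) ^ 3 * g x)
        ((3 : ℕ) * (x - a) ^ 2 * 1 * g x + (x - a) ^ 3 * deriv g x) x :=
      (((hasDerivAt_id' x).sub_const a).pow 3).mul hgx.hasDerivAt
    rw [hfx.deriv_eq, this.deriv]
    push_cast
    ring
  refine ⟨by simpa using hfg.eq_of_nhds, by simp [hderiv.eq_of_nhds], ?_⟩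
  have : HasDerivAt (fun x => (x - a) ^ 2 * (3 * g x + (x - a) * deriv g x))
      ((2 : ℕ) * (a - a) ^ 1 * 1 * (3 * g a + (a - a) * deriv g a) +
        (a - a) ^ 2 * (3 * deriv g a + (1 * deriv g a + (a - a) * deriv (deriv g) a))) a :=
    (((hasDerivAt_id' a).sub_const a).pow 2).mul
      (((hg.differentiableAt (by simp)).hasDerivAt.const_mul 3).add
        (((hasDerivAt_id' a).sub_const a).mul hdg.hasDerivAt))
  simpa [hderiv.deriv_eq] using this.deriv

noncomputable def sdsLapse (M Λ r : ℝ) : ℝ := 1 - 2 * M / r - Λ * r ^ 2 / 3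

theorem sdsLapse_three_mul_pos {M Λ : ℝ} (hM : M ≠ 0) (h9 : 9 * M ^ 2 * Λ < 1) :
    0 < sdsLapse M Λ (3 * M) := by
  have : sdsLapse M Λ (3 * M) = (1 - 9 * M ^ 2 * Λ) / 3 := by
    unfold sdsLapse; field_simp; ring
  rw [this]; linarith

theorem sdsLapse_eq_neg_sq_of_cusp {M Λ r : ℝ} (hr : r ≠ 0)
    (hcusp : r ^ 2 * sdsLapse M Λ r + (3 * M - r) ^ 2 = 0) :
    sdsLapse M Λ r = -((r - 3 * M) / r) ^ 2 := by
  field_simp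
  linear_combination hcusp

theorem lambda_eq_of_cusp {M Λ r : ℝ} (hr : r ≠ 0)
    (hcusp : r ^ 2 * sdsLapse M Λ r + (3 * M - r) ^ 2 = 0) :
    Λ = 3 * (2 * r ^ 2 - 8 * M * r + 9 * M ^ 2) / r ^ 4 := by
  unfold sdsLapse at hcusp
  field_simp at hcusp ⊢
  linear_combination -hcusp

theorem sdsLapse_add_sq_eq_sub_pow_three_mul {M a r : ℝ} (ha : a ≠ 0) (hr : r ≠ 0) :
    sdsLapse M (3 * (2 * a ^ 2 - 8 * M * a + 9 * M ^ 2) / a ^ 4) r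
        + ((9 * M - 4 * a) / a ^ 2 * r / 3 - (-(a ^ 2) / 3) / r ^ 2) ^ 2
      = (r - a) ^ 3 * (-(2 * r ^ 3 + 6 * a * r ^ 2 + 3 * a ^ 2 * r + a ^ 3) / (9 * a ^ 2 * r ^ 4)) := by
  unfold sdsLapse
  field_simp
  ring

theorem stmt_9_general (Λ M : ℝ) (hM : 0 < M) (h9 : 9 * M ^ 2 * Λ < 1)
    (V : ℝ → ℝ) (hV : ∀ r, V r = 1 - 2 * M / r - Λ * r ^ 2 / 3)
    (r_c : ℝ)
    (hlarger : ∀ r, r_c < r → V r < 0)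
    (r_k : ℝ) (hk : r_c < r_k)
    (hrk : r_k ^ 2 * V r_k + (3 * M - r_k) ^ 2 = 0)
    (K C : ℝ)
    (hK : K = (3 * M - r_k) / (r_k ^ 2 * Real.sqrt (-V r_k)) -
      (3 / r_k) * Real.sqrt (-V r_k))
    (hC : C = (r_k / 3) * (3 * M - r_k) / Real.sqrt (-V r_k))
    (D : ℝ → ℝ) (hD : ∀ r, D r = V r + (K * r / 3 - C / r ^ 2) ^ 2) :
    D r_k = 0 ∧ deriv D r_k = 0 ∧ deriv (deriv D) r_k = 0 := by
  obtain rfl : V = sdsLapse M Λ := funext hV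
  have h3M : 3 * M < r_k :=
    (le_of_not_gt fun h => (hlarger _ h).not_gt (sdsLapse_three_mul_pos hM.ne' h9)).trans_lt hk
  have hr_k : 0 < r_k := by linarith
  have hgap : r_k - 3 * M ≠ 0 := sub_ne_zero.2 h3M.ne'
  have hsqrt : √(-sdsLapse M Λ r_k) = (r_k - 3 * M) / r_k := by
    rw [sdsLapse_eq_neg_sq_of_cusp hr_k.ne' hrk, neg_neg,
      Real.sqrt_sq (div_nonneg (by linarith) hr_k.le)]
  have hK' : K = (9 * M - 4 * r_k) / r_k ^ 2 := by
    rw [hK, hsqrt]; field_simp; ring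
  have hC' : C = -(r_k ^ 2) / 3 := by
    rw [hC, hsqrt]; field_simp; ring
  refine triple_zero_of_eventuallyEq_sub_pow_three_mul ?_
    (g := fun r => -(2 * r ^ 3 + 6 * r_k * r ^ 2 + 3 * r_k ^ 2 * r + r_k ^ 3) / (9 * r_k ^ 2 * r ^ 4))
    (by have := hr_k.ne'; fun_prop (disch := positivity))
  filter_upwards [eventually_ne_nhds hr_k.ne'] with r hr
  rw [hD, hK', hC', lambda_eq_of_cusp hr_k.ne' hrk]
  exact sdsLapse_add_sq_eq_sub_pow_three_mul hr_k.ne' hr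

/-- At the cusp (K, C) = (K_m(r_k), C_m(r_k)), the function
D(r) = V(r) + (Kr/3 - C/r²)² has a third-order zero at r = r_k. -/
theorem stmt_9 (Λ M : ℝ) (hΛ : 0 < Λ) (hM : 0 < M) (h9 : 9 * M ^ 2 * Λ < 1)
    (V : ℝ → ℝ) (hV : ∀ r, V r = 1 - 2 * M / r - Λ * r ^ 2 / 3)
    (r_c : ℝ) (hc : 0 < r_c) (hVc : V r_c = 0)
    (hlarger : ∀ r, r_c < r → V r < 0)
    (r_k : ℝ) (hk : r_c < r_k)
    (hrk : r_k ^ 2 * V r_k + (3 * M - r_k) ^ 2 = 0)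
    (K C : ℝ)
    (hK : K = (3 * M - r_k) / (r_k ^ 2 * Real.sqrt (-V r_k)) -
      (3 / r_k) * Real.sqrt (-V r_k))
    (hC : C = (r_k / 3) * (3 * M - r_k) / Real.sqrt (-V r_k))
    (D : ℝ → ℝ) (hD : ∀ r, D r = V r + (K * r / 3 - C / r ^ 2) ^ 2) :
    D r_k = 0 ∧ deriv D r_k = 0 ∧ deriv (deriv D) r_k = 0 :=
  stmt_9_general Λ M hM h9 V hV r_c hlarger r_k hk hrk K C hK hC D hD
end

section
/- If r_min is a simple root of D(r) with D'(r_min) > 0 and r_min equals the cosmological horizon r_c (i.e., V(r_c) = 0), a contradiction follows: D(r_c) = 0 forces (K r_c/3 - C/r_c²)² = 0 and hence D'(r_c) = V'(r_c) < 0. Therefore no compact CMC data set has r_min = r_c. -/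
/-! Since `V r_c = 0 = D r_c`, the square `(K r_c / 3 - C / r_c²)²` vanishes, so the square term
has a double zero at `r_c` and contributes nothing to `D'(r_c)`. -/

variable {𝕜 : Type*} [NontriviallyNormedField 𝕜]

theorem hasDerivAt_sq_of_eq_zero {g : 𝕜 → 𝕜} {x : 𝕜} (hg : DifferentiableAt 𝕜 g x)
    (hgx : g x = 0) : HasDerivAt (fun y => g y ^ 2) 0 x := by
  simpa [hgx] using hg.hasDerivAt.fun_pow 2

theorem deriv_add_sq_of_eq_zero {f g : 𝕜 → 𝕜} {x : 𝕜} (hg : DifferentiableAt 𝕜 g x)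
    (hgx : g x = 0) : deriv (fun y => f y + g y ^ 2) x = deriv f x := by
  have hsq := hasDerivAt_sq_of_eq_zero hg hgx
  by_cases hf : DifferentiableAt 𝕜 f x
  · simpa using (hf.hasDerivAt.fun_add hsq).deriv
  · have hfsq : ¬DifferentiableAt 𝕜 (fun y => f y + g y ^ 2) x :=
      (hsq.differentiableAt.add_iff_left (f := f)).not.mpr hf
    rw [deriv_zero_of_not_differentiableAt hf, deriv_zero_of_not_differentiableAt hfsq]

theorem stmt_11_general
    (V : ℝ → ℝ)
    (r_c : ℝ) (hc : 0 < r_c) (hVc : V r_c = 0) (hVc' : deriv V r_c < 0)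
    (K C : ℝ)
    (D : ℝ → ℝ) (hD : ∀ r, D r = V r + (K * r / 3 - C / r ^ 2) ^ 2)
    (hDc : D r_c = 0) :
    deriv D r_c = deriv V r_c ∧ deriv D r_c < 0 := by
  have hg : DifferentiableAt ℝ (fun r => K * r / 3 - C / r ^ 2) r_c := by
    have : r_c ^ 2 ≠ 0 := by positivity
    fun_prop (disch := exact this)
  have hg0 : K * r_c / 3 - C / r_c ^ 2 = 0 := by
    have hsq := hD r_c
    rw [hVc, hDc, zero_add] at hsq
    exact pow_eq_zero_iff two_ne_zero |>.mp hsq.symm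
  have hDV : deriv D r_c = deriv V r_c := by
    rw [funext hD]
    exact deriv_add_sq_of_eq_zero hg hg0
  exact ⟨hDV, hDV ▸ hVc'⟩

/-- If D(r_c) = 0 at the cosmological horizon r_c (where V(r_c) = 0 and
V'(r_c) < 0), then D'(r_c) = V'(r_c) < 0; hence r_min ≠ r_c for compact CMC data. -/
theorem stmt_11 (Λ M : ℝ) (hΛ : 0 < Λ) (hM : 0 < M) (h9 : 9 * M ^ 2 * Λ < 1)
    (V : ℝ → ℝ) (hV : ∀ r, V r = 1 - 2 * M / r - Λ * r ^ 2 / 3)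
    (r_c : ℝ) (hc : 0 < r_c) (hVc : V r_c = 0) (hVc' : deriv V r_c < 0)
    (K C : ℝ)
    (D : ℝ → ℝ) (hD : ∀ r, D r = V r + (K * r / 3 - C / r ^ 2) ^ 2)
    (hDc : D r_c = 0) :
    deriv D r_c = deriv V r_c ∧ deriv D r_c < 0 :=
  stmt_11_general V r_c hc hVc hVc' K C D hD hDc
end

section
/- For any K, C ∈ ℝ (not both making the perturbation vanish identically), the function D(r) = 1 - 2M/r - Λr²/3 + (Kr/3 - C/r²)² has at most three positive zeros counted without multiplicity. -/
/-!
For `r ≠ 0`, `D'(r) = (a r⁶ + b r³ + c) / r⁵` with `a = 2K²/9 - 2Λ/3`, `b = 2M + 2KC/3` and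
`c = -4C²`. By Rolle's theorem a zero of `D'` lies between any two consecutive positive zeros
of `D`, and the positive zeros of `D'` are cube roots of zeros of the quadratic
`a t² + b t + c`, so there are at most two of them unless `a = b = c = 0`. In that case
`C = M = 0` and `K² = 3Λ`, so `D ≡ 1` has no zeros at all.
-/

open Set

lemma quadratic_coeffs_eq_zero_of_three_roots {a b c t₁ t₂ t₃ : ℝ}
    (h₁₂ : t₁ ≠ t₂) (h₁₃ : t₁ ≠ t₃) (h₂₃ : t₂ ≠ t₃)
    (e₁ : a * t₁ ^ 2 + b * t₁ + c = 0) (e₂ : a * t₂ ^ 2 + b * t₂ + c = 0)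
    (e₃ : a * t₃ ^ 2 + b * t₃ + c = 0) : a = 0 ∧ b = 0 ∧ c = 0 := by
  have s₁₂ : a * (t₁ + t₂) + b = 0 := by
    refine (mul_eq_zero.mp ?_).resolve_left (sub_ne_zero.mpr h₁₂)
    linear_combination e₁ - e₂
  have s₂₃ : a * (t₂ + t₃) + b = 0 := by
    refine (mul_eq_zero.mp ?_).resolve_left (sub_ne_zero.mpr h₂₃)
    linear_combination e₂ - e₃
  have ha : a = 0 := by
    refine (mul_eq_zero.mp ?_).resolve_left (sub_ne_zero.mpr h₁₃)
    linear_combination s₁₂ - s₂₃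
  have hb : b = 0 := by linear_combination s₁₂ - (t₁ + t₂) * ha
  exact ⟨ha, hb, by linear_combination e₁ - t₁ ^ 2 * ha - t₁ * hb⟩

lemma encard_setOf_quadratic_eq_zero_le_two {a b c : ℝ} (h : ¬(a = 0 ∧ b = 0 ∧ c = 0)) :
    {t : ℝ | a * t ^ 2 + b * t + c = 0}.encard ≤ 2 := by
  by_contra! hlt
  obtain ⟨u, hu, hu3⟩ := exists_subset_encard_eq (Order.add_one_le_of_lt hlt)
  obtain ⟨t₁, t₂, t₃, h₁₂, h₁₃, h₂₃, rfl⟩ := encard_eq_three.mp hu3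
  exact h <| quadratic_coeffs_eq_zero_of_three_roots h₁₂ h₁₃ h₂₃
    (hu (by simp)) (hu (by simp)) (hu (by simp))

lemma encard_setOf_eq_zero_le_encard_setOf_deriv_eq_zero_add_one {f f' : ℝ → ℝ} {s : Set ℝ}
    (hs : s.OrdConnected) (hf : ∀ x ∈ s, HasDerivAt f (f' x) x) :
    {x ∈ s | f x = 0}.encard ≤ {x ∈ s | f' x = 0}.encard + 1 := by
  obtain hinf | hfin := {x ∈ s | f' x = 0}.infinite_or_finite
  · simp [hinf.encard_eq]
  have rolle : ∀ u : Finset ℝ, ↑u ⊆ {x ∈ s | f x = 0} → u.card ≤ hfin.toFinset.card + 1 := by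
    intro u hu
    refine Finset.card_le_of_interleaved fun x hx y hy hxy _ => ?_
    obtain ⟨hxs, hfx⟩ := hu hx
    obtain ⟨hys, hfy⟩ := hu hy
    have hIcc : Icc x y ⊆ s := hs.out hxs hys
    obtain ⟨z, hz, hf'z⟩ := exists_hasDerivAt_eq_zero hxy
      (fun z hz => (hf z (hIcc hz)).continuousAt.continuousWithinAt) (hfx.trans hfy.symm)
      (fun z hz => hf z (hIcc (Ioo_subset_Icc_self hz)))
    exact ⟨z, hfin.mem_toFinset.mpr ⟨hIcc (Ioo_subset_Icc_self hz), hf'z⟩, hz⟩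
  obtain hZinf | hZfin := {x ∈ s | f x = 0}.infinite_or_finite
  · obtain ⟨u, hu, hcard⟩ := hZinf.exists_subset_card_eq (hfin.toFinset.card + 2)
    have := rolle u hu
    omega
  · rw [hZfin.encard_eq_coe_toFinset_card, hfin.encard_eq_coe_toFinset_card]
    exact_mod_cast rolle _ (by simp)

noncomputable def horizonFunction (Λ M K C r : ℝ) : ℝ :=
  1 - 2 * M / r - Λ * r ^ 2 / 3 + (K * r / 3 - C / r ^ 2) ^ 2

lemma hasDerivAt_horizonFunction (Λ M K C : ℝ) {x : ℝ} (hx : x ≠ 0) :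
    HasDerivAt (horizonFunction Λ M K C)
      (((2 * K ^ 2 / 9 - 2 * Λ / 3) * x ^ 6 + (2 * M + 2 * K * C / 3) * x ^ 3 - 4 * C ^ 2)
        / x ^ 5) x := by
  have hsquare := ((((hasDerivAt_id x).const_mul K).div_const 3).sub
    ((hasDerivAt_const x C).div (hasDerivAt_pow 2 x) (pow_ne_zero 2 hx))).pow 2
  have hsum := (((hasDerivAt_const x 1).sub
    ((hasDerivAt_const x (2 * M)).div (hasDerivAt_id x) hx)).sub
    (((hasDerivAt_pow 2 x).const_mul Λ).div_const 3)).add hsquare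
  refine hsum.congr_deriv ?_
  simp only [Pi.sub_apply, Pi.div_apply, id, Nat.cast_ofNat, Nat.add_one_sub_one, pow_one]
  field_simp
  ring

lemma encard_setOf_quadratic_cube_eq_zero_le_two {a b c : ℝ} (h : ¬(a = 0 ∧ b = 0 ∧ c = 0)) :
    {x : ℝ | a * x ^ 6 + b * x ^ 3 + c = 0}.encard ≤ 2 :=
  (encard_le_encard_of_injOn (t := {t | a * t ^ 2 + b * t + c = 0})
      (fun x hx => by simp only [mem_ofPred_eq] at hx ⊢; linear_combination hx)
      (Odd.strictMono_pow (by decide : Odd 3)).injective.injOn).trans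
    (encard_setOf_quadratic_eq_zero_le_two h)

lemma horizonFunction_eq_one {Λ K : ℝ} (hK : K ^ 2 = 3 * Λ) (r : ℝ) :
    horizonFunction Λ 0 K 0 r = 1 := by
  simp only [horizonFunction]
  linear_combination r ^ 2 / 9 * hK

theorem stmt_12_general (Λ M K C : ℝ)
    (D : ℝ → ℝ)
    (hD : ∀ r, D r = 1 - 2 * M / r - Λ * r ^ 2 / 3 + (K * r / 3 - C / r ^ 2) ^ 2) :
    {r : ℝ | 0 < r ∧ D r = 0}.encard ≤ 3 := by
  obtain rfl : D = horizonFunction Λ M K C := funext hD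
  by_cases hdeg : 2 * K ^ 2 / 9 - 2 * Λ / 3 = 0 ∧ 2 * M + 2 * K * C / 3 = 0 ∧ -4 * C ^ 2 = 0
  · obtain ⟨hK, hM, hC⟩ := hdeg
    obtain rfl : C = 0 := by simpa using hC
    obtain rfl : M = 0 := by linarith
    simp [horizonFunction_eq_one (by linarith : K ^ 2 = 3 * Λ)]
  calc {r : ℝ | 0 < r ∧ horizonFunction Λ M K C r = 0}.encard
      ≤ {x ∈ Ioi 0 | ((2 * K ^ 2 / 9 - 2 * Λ / 3) * x ^ 6 + (2 * M + 2 * K * C / 3) * x ^ 3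
          - 4 * C ^ 2) / x ^ 5 = 0}.encard + 1 :=
        encard_setOf_eq_zero_le_encard_setOf_deriv_eq_zero_add_one ordConnected_Ioi
          fun x hx => hasDerivAt_horizonFunction Λ M K C (ne_of_gt hx)
    _ ≤ 2 + 1 := by
        gcongr
        refine (encard_le_encard fun x hx => ?_).trans
          (encard_setOf_quadratic_cube_eq_zero_le_two hdeg)
        obtain ⟨hx, hx0⟩ := hx
        rw [div_eq_zero_iff, or_iff_left (pow_ne_zero 5 (ne_of_gt hx))] at hx0
        simp only [mem_ofPred_eq]
        linear_combination hx0
    _ = 3 := by norm_num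

/-- For any K, C (with the transverse-traceless perturbation not identically
zero), D(r) = 1 - 2M/r - Λr²/3 + (Kr/3 - C/r²)² has at most three distinct
positive zeros. -/
theorem stmt_12 (Λ M K C : ℝ) (hΛ : 0 < Λ) (hKC : K ≠ 0 ∨ C ≠ 0)
    (D : ℝ → ℝ)
    (hD : ∀ r, D r = 1 - 2 * M / r - Λ * r ^ 2 / 3 + (K * r / 3 - C / r ^ 2) ^ 2) :
    {r : ℝ | 0 < r ∧ D r = 0}.encard ≤ 3 :=
  stmt_12_general Λ M K C D hD
end

section
/- Along the curve of constant-radius CMC data, the derivative of the product V(r_m)·D''(r_m) with respect to r_m equals 8·r_m⁻³·(1 - 3M/r_m)², which is strictly positive for r_m > 3M; hence V(r_m)·D''(r_m) is strictly increasing on (r_k, ∞). -/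
/-!
Writing `s = √(-V(r_m))`, the CMC data are tuned so that at `r = r_m` one has
`K r/3 - C/r² = -s` and `K/3 + 2C/r³ = (3M - r)/(r² s) - s/r`. Substituting into
`D'' = V'' + 2((K/3 + 2C/r³)² - 6 (K r/3 - C/r²) C/r⁴)` and multiplying by `V = -s²` eliminates
the square root: `V·D''` becomes the rational function `V V'' - 2(3M - r)²/r⁴ - 2V²/r²` of `r_m`,
whose derivative is `8 r⁻³ (1 - 3M/r)²`. Finally `V(3M) = (1 - 9M²Λ)/3 > 0` forces `3M ≤ r_c`, so
this derivative is positive beyond `r_c`.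
-/

open Filter Topology

noncomputable section

def kottlerV (M Λ r : ℝ) : ℝ := 1 - 2 * M / r - Λ * r ^ 2 / 3

def cmcD (M Λ K C r : ℝ) : ℝ := kottlerV M Λ r + (K * r / 3 - C / r ^ 2) ^ 2

def cmcK (M Λ r : ℝ) : ℝ :=
  (3 * M - r) / (r ^ 2 * √(-kottlerV M Λ r)) - 3 / r * √(-kottlerV M Λ r)

def cmcC (M Λ r : ℝ) : ℝ := r / 3 * (3 * M - r) / √(-kottlerV M Λ r)

/-- `V·D''` along the CMC curve, in closed form. -/
def cmcVDD (M Λ r : ℝ) : ℝ :=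
  kottlerV M Λ r * (-4 * M / r ^ 3 - 2 * Λ / 3) - 2 * (3 * M - r) ^ 2 / r ^ 4
    - 2 * kottlerV M Λ r ^ 2 / r ^ 2

end

variable {M Λ K C r : ℝ}

lemma hasDerivAt_const_div_pow (c : ℝ) (n : ℕ) (hr : r ≠ 0) :
    HasDerivAt (fun x => c / x ^ n) (-(n * c / r ^ (n + 1))) r := by
  refine ((hasDerivAt_const r c).div (hasDerivAt_pow n r) (pow_ne_zero n hr)).congr_deriv ?_
  rcases n with _ | n
  · simp
  · rw [Nat.add_sub_cancel]
    field_simp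
    ring

lemma hasDerivAt_kottlerV (hr : r ≠ 0) :
    HasDerivAt (kottlerV M Λ) (2 * M / r ^ 2 - 2 * Λ * r / 3) r := by
  have h2M : HasDerivAt (fun x => 2 * M / x) (-(2 * M / r ^ 2)) r := by
    simpa using hasDerivAt_const_div_pow (2 * M) 1 hr
  refine (((hasDerivAt_const r 1).fun_sub h2M).fun_sub
    (((hasDerivAt_pow 2 r).const_mul Λ).div_const 3)).congr_deriv ?_
  push_cast; ring

lemma hasDerivAt_kottlerV_deriv (hr : r ≠ 0) :
    HasDerivAt (fun x => 2 * M / x ^ 2 - 2 * Λ * x / 3) (-4 * M / r ^ 3 - 2 * Λ / 3) r := by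
  refine ((hasDerivAt_const_div_pow (2 * M) 2 hr).fun_sub
    (((hasDerivAt_id' r).const_mul (2 * Λ)).div_const 3)).congr_deriv ?_
  push_cast; ring

lemma hasDerivAt_cmcD (hr : r ≠ 0) :
    HasDerivAt (cmcD M Λ K C)
      (2 * M / r ^ 2 - 2 * Λ * r / 3 + 2 * (K * r / 3 - C / r ^ 2) * (K / 3 + 2 * C / r ^ 3)) r := by
  have hu := (((hasDerivAt_id' r).const_mul K).div_const 3).fun_sub (hasDerivAt_const_div_pow C 2 hr)
  refine ((hasDerivAt_kottlerV hr).fun_add (hu.fun_pow 2)).congr_deriv ?_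
  push_cast; field_simp; ring

lemma deriv_deriv_cmcD (hr : r ≠ 0) :
    deriv (deriv (cmcD M Λ K C)) r = -4 * M / r ^ 3 - 2 * Λ / 3
      + 2 * ((K / 3 + 2 * C / r ^ 3) ^ 2 - 6 * (K * r / 3 - C / r ^ 2) * C / r ^ 4) := by
  have hD' : deriv (cmcD M Λ K C) =ᶠ[𝓝 r] fun x =>
      2 * M / x ^ 2 - 2 * Λ * x / 3 + 2 * (K * x / 3 - C / x ^ 2) * (K / 3 + 2 * C / x ^ 3) := by
    filter_upwards [eventually_ne_nhds hr] with x hx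
    exact (hasDerivAt_cmcD hx).deriv
  have hu := (((hasDerivAt_id' r).const_mul K).div_const 3).fun_sub (hasDerivAt_const_div_pow C 2 hr)
  have hu' := (hasDerivAt_const r (K / 3)).fun_add (hasDerivAt_const_div_pow (2 * C) 3 hr)
  rw [hD'.deriv_eq]
  refine ((hasDerivAt_kottlerV_deriv hr).fun_add ((hu.const_mul 2).fun_mul hu')).deriv.trans ?_
  push_cast; field_simp; ring

lemma kottlerV_mul_deriv_deriv_cmcD (hr : r ≠ 0) (hV : kottlerV M Λ r < 0) :
    kottlerV M Λ r * deriv (deriv (cmcD M Λ (cmcK M Λ r) (cmcC M Λ r))) r = cmcVDD M Λ r := by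
  rw [deriv_deriv_cmcD hr, cmcK, cmcC, cmcVDD]
  set s := √(-kottlerV M Λ r)
  have hs : 0 < s := Real.sqrt_pos.2 (neg_pos.2 hV)
  have hVs : kottlerV M Λ r = -s ^ 2 := by rw [Real.sq_sqrt (neg_pos.2 hV).le, neg_neg]
  rw [hVs]
  field_simp
  ring

lemma hasDerivAt_cmcVDD (hr : r ≠ 0) :
    HasDerivAt (cmcVDD M Λ) (8 * r⁻¹ ^ 3 * (1 - 3 * M / r) ^ 2) r := by
  have hV := hasDerivAt_kottlerV (M := M) (Λ := Λ) hr
  have hV'' := (hasDerivAt_const_div_pow (-4 * M) 3 hr).sub_const (2 * Λ / 3)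
  have hw := (((hasDerivAt_const r (3 * M)).fun_sub (hasDerivAt_id' r)).fun_pow 2).const_mul 2
  refine (((hV.fun_mul hV'').fun_sub (hw.fun_div (hasDerivAt_pow 4 r) (pow_ne_zero 4 hr))).fun_sub
    (((hV.fun_pow 2).const_mul 2).fun_div (hasDerivAt_pow 2 r) (pow_ne_zero 2 hr))).congr_deriv ?_
  simp only [kottlerV]
  push_cast
  field_simp
  ring

lemma kottlerV_three_mul_pos (hM : M ≠ 0) (h9 : 9 * M ^ 2 * Λ < 1) :
    0 < kottlerV M Λ (3 * M) := by
  have h : kottlerV M Λ (3 * M) = (1 - 9 * M ^ 2 * Λ) / 3 := by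
    unfold kottlerV; field_simp; ring
  rw [h]; linarith

theorem stmt_13_general (Λ M : ℝ) (hM : 0 < M) (h9 : 9 * M ^ 2 * Λ < 1)
    (V : ℝ → ℝ) (hV : ∀ r, V r = 1 - 2 * M / r - Λ * r ^ 2 / 3)
    (r_c : ℝ) (hc : 0 < r_c)
    (hlarger : ∀ r, r_c < r → V r < 0)
    (r_k : ℝ) (hk : r_c < r_k)
    (Km Cm : ℝ → ℝ)
    (hKm : ∀ r, Km r = (3 * M - r) / (r ^ 2 * Real.sqrt (-V r)) -
      (3 / r) * Real.sqrt (-V r))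
    (hCm : ∀ r, Cm r = (r / 3) * (3 * M - r) / Real.sqrt (-V r))
    (F : ℝ → ℝ)
    (hF : ∀ rm, F rm =
      V rm * deriv (deriv (fun r => V r + (Km rm * r / 3 - Cm rm / r ^ 2) ^ 2)) rm) :
    (∀ rm, r_c < rm → deriv F rm = 8 * rm⁻¹ ^ 3 * (1 - 3 * M / rm) ^ 2) ∧
    (∀ rm, 3 * M < rm → 0 < 8 * rm⁻¹ ^ 3 * (1 - 3 * M / rm) ^ 2) ∧
    StrictMonoOn F (Set.Ioi r_k) := by
  obtain rfl : V = kottlerV M Λ := funext hV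
  have hF_eq : ∀ rm, r_c < rm → F =ᶠ[𝓝 rm] cmcVDD M Λ := fun rm hrm => by
    filter_upwards [Ioi_mem_nhds hrm] with r hr
    rw [hF, hKm, hCm]
    exact kottlerV_mul_deriv_deriv_cmcD (hc.trans hr).ne' (hlarger r hr)
  have hF_deriv : ∀ rm, r_c < rm → HasDerivAt F (8 * rm⁻¹ ^ 3 * (1 - 3 * M / rm) ^ 2) rm :=
    fun rm hrm => (hasDerivAt_cmcVDD (hc.trans hrm).ne').congr_of_eventuallyEq (hF_eq rm hrm)
  have hpos : ∀ rm, 3 * M < rm → 0 < 8 * rm⁻¹ ^ 3 * (1 - 3 * M / rm) ^ 2 := fun rm hrm => by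
    have hrm0 : 0 < rm := by linarith
    have : 0 < 1 - 3 * M / rm := by rw [sub_pos, div_lt_one hrm0]; exact hrm
    positivity
  have h3M : 3 * M ≤ r_c := le_of_not_gt fun h =>
    (hlarger _ h).not_gt (kottlerV_three_mul_pos hM.ne' h9)
  refine ⟨fun rm hrm => (hF_deriv rm hrm).deriv, hpos, ?_⟩
  refine strictMonoOn_of_deriv_pos (convex_Ioi r_k)
    (fun x hx => (hF_deriv x (hk.trans hx)).continuousAt.continuousWithinAt) fun x hx => ?_
  rw [interior_Ioi] at hx
  rw [(hF_deriv x (hk.trans hx)).deriv]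
  exact hpos x (h3M.trans_lt (hk.trans hx))

/-- Along the curve of constant-radius CMC data, the derivative of
r_m ↦ V(r_m)·D''(r_m) equals 8·r_m⁻³·(1 - 3M/r_m)², which is positive for
r_m > 3M; hence V(r_m)·D''(r_m) is strictly increasing on (r_k, ∞). -/
theorem stmt_13 (Λ M : ℝ) (hΛ : 0 < Λ) (hM : 0 < M) (h9 : 9 * M ^ 2 * Λ < 1)
    (V : ℝ → ℝ) (hV : ∀ r, V r = 1 - 2 * M / r - Λ * r ^ 2 / 3)
    (r_c : ℝ) (hc : 0 < r_c) (hVc : V r_c = 0)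
    (hlarger : ∀ r, r_c < r → V r < 0)
    (r_k : ℝ) (hk : r_c < r_k)
    (hrk : r_k ^ 2 * V r_k + (3 * M - r_k) ^ 2 = 0)
    (Km Cm : ℝ → ℝ)
    (hKm : ∀ r, Km r = (3 * M - r) / (r ^ 2 * Real.sqrt (-V r)) -
      (3 / r) * Real.sqrt (-V r))
    (hCm : ∀ r, Cm r = (r / 3) * (3 * M - r) / Real.sqrt (-V r))
    (F : ℝ → ℝ)
    (hF : ∀ rm, F rm =
      V rm * deriv (deriv (fun r => V r + (Km rm * r / 3 - Cm rm / r ^ 2) ^ 2)) rm) :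
    (∀ rm, r_c < rm → deriv F rm = 8 * rm⁻¹ ^ 3 * (1 - 3 * M / rm) ^ 2) ∧
    (∀ rm, 3 * M < rm → 0 < 8 * rm⁻¹ ^ 3 * (1 - 3 * M / rm) ^ 2) ∧
    StrictMonoOn F (Set.Ioi r_k) :=
  stmt_13_general Λ M hM h9 V hV r_c hc hlarger r_k hk Km Cm hKm hCm F hF
end
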